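/- arXiv:2302.11604 — 4 statements merged into one kernel-verified Lean document; each statement's English description precedes it below -/
import Mathlib

section
/- Let m ≥ 1, let V ⊆ ℝ^m be open, and let x, q : V → ℝ^m be smooth maps such that x is a smooth diffeomorphism from V onto a convex open set U ⊆ ℝ^m. Assume that for every y ∈ V and all u, w ∈ ℝ^m one has ⟨Dq(y)u, Dx(y)w⟩ = ⟨Dq(y)w, Dx(y)u⟩ (the condition that the embedding ι(y) = (x(y), q(y)) into T*ℝ^m = ℝ^m × ℝ^m pulls the canonical symplectic form Σ_i dq_i ∧ dx^i back to zero). Then there exists a smooth function ψ : U → ℝ such that q(y) = ∇ψ(x(y)) for all y ∈ V; that is, the image of ι is the graph of the differential dψ. -/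
/-!
Put `p := q ∘ xinv` on `U`. By the chain rule `Dq = Dp(x) ∘ Dx`, and `Dx` is onto because `x`
has a differentiable left inverse, so the isotropy condition says exactly that `Dp` is
symmetric: the 1-form `z ↦ ⟪p z, ·⟫` is closed. On the convex set `U` it is exact by the
Poincaré lemma, and its primitive `ψ` is smooth because its gradient `p` is.
-/

open scoped RealInnerProductSpace Topology
open Filter

variable {E : Type*} [NormedAddCommGroup E] [InnerProductSpace ℝ E]

theorem Convex.exists_forall_hasGradientAt_of_fderiv_symmetric [CompleteSpace E] {U : Set E}
    (hUconv : Convex ℝ U) (hU : IsOpen U) {p : E → E} (hp : DifferentiableOn ℝ p U)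
    (hsymm : ∀ z ∈ U, ∀ u w, ⟪fderiv ℝ p z u, w⟫ = ⟪fderiv ℝ p z w, u⟫) :
    ∃ ψ : E → ℝ, ∀ z ∈ U, HasGradientAt ψ (p z) z := by
  have hω : ∀ z ∈ U,
      HasFDerivAt (fun z => innerSL ℝ (p z)) ((innerSL ℝ).comp (fderiv ℝ p z)) z :=
    fun z hz => (innerSL ℝ).hasFDerivAt.comp z (hp.differentiableAt (hU.mem_nhds hz)).hasFDerivAt
  obtain ⟨ψ, hψ⟩ := hUconv.exists_forall_hasFDerivAt_of_fderiv_symmetric hU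
    (fun z hz => (hω z hz).differentiableAt.differentiableWithinAt) fun z hz u w => by
      simpa [(hω z hz).fderiv] using hsymm z hz u w
  exact ⟨ψ, fun z hz => hasGradientAt_iff_hasFDerivAt.2 (hψ z hz)⟩

theorem ContDiffOn.of_hasGradientAt [CompleteSpace E] {U : Set E} (hU : IsOpen U)
    {ψ : E → ℝ} {p : E → E} {n : ℕ∞} (hp : ContDiffOn ℝ n p U)
    (hψ : ∀ z ∈ U, HasGradientAt ψ (p z) z) : ContDiffOn ℝ (n + 1) ψ U := by
  rw [contDiffOn_succ_iff_fderiv_of_isOpen hU]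
  refine ⟨fun z hz => (hψ z hz).differentiableAt.differentiableWithinAt, by simp, ?_⟩
  exact ((innerSL ℝ).contDiff.comp_contDiffOn hp).congr fun z hz =>
    (hasGradientAt_iff_hasFDerivAt.1 (hψ z hz)).fderiv

theorem surjective_fderiv_of_eventuallyEq_leftInverse [FiniteDimensional ℝ E] {f g : E → E}
    {y : E} (hf : DifferentiableAt ℝ f y) (hg : DifferentiableAt ℝ g (f y))
    (hgf : g ∘ f =ᶠ[𝓝 y] id) : Function.Surjective (fderiv ℝ f y) := by
  have hid : (fderiv ℝ g (f y)).comp (fderiv ℝ f y) = ContinuousLinearMap.id ℝ E := by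
    rw [← fderiv_comp y hg hf, hgf.fderiv_eq, fderiv_id]
  refine (LinearMap.injective_iff_surjective (f := (fderiv ℝ f y : E →ₗ[ℝ] E))).1 ?_
  exact Function.LeftInverse.injective (g := fderiv ℝ g (f y)) fun u => by
    simpa using congrArg (· u) hid

theorem inner_fderiv_comm_of_eventuallyEq_comp {F : Type*} [NormedAddCommGroup F]
    [NormedSpace ℝ F] {x q : F → E} {p : E → E} {y : F} (hx : DifferentiableAt ℝ x y)
    (hp : DifferentiableAt ℝ p (x y)) (hqpx : q =ᶠ[𝓝 y] p ∘ x)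
    (hsurj : Function.Surjective (fderiv ℝ x y))
    (hsym : ∀ u w, ⟪fderiv ℝ q y u, fderiv ℝ x y w⟫ = ⟪fderiv ℝ q y w, fderiv ℝ x y u⟫)
    (u w : E) : ⟪fderiv ℝ p (x y) u, w⟫ = ⟪fderiv ℝ p (x y) w, u⟫ := by
  obtain ⟨u, rfl⟩ := hsurj u
  obtain ⟨w, rfl⟩ := hsurj w
  simpa [hqpx.fderiv_eq, fderiv_comp y hp hx] using hsym u w

theorem stmt_0_general (m : ℕ)
    (V U : Set (EuclideanSpace ℝ (Fin m)))
    (hV : IsOpen V) (hU : IsOpen U) (hUconv : Convex ℝ U)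
    (x q : EuclideanSpace ℝ (Fin m) → EuclideanSpace ℝ (Fin m))
    (hx : ContDiffOn ℝ (⊤ : ℕ∞) x V) (hq : ContDiffOn ℝ (⊤ : ℕ∞) q V)
    (hbij : Set.BijOn x V U)
    (xinv : EuclideanSpace ℝ (Fin m) → EuclideanSpace ℝ (Fin m))
    (hxinv : ContDiffOn ℝ (⊤ : ℕ∞) xinv U)
    (hleft : ∀ y ∈ V, xinv (x y) = y)
    (hsym : ∀ y ∈ V, ∀ u w : EuclideanSpace ℝ (Fin m),
      ⟪fderiv ℝ q y u, fderiv ℝ x y w⟫ = ⟪fderiv ℝ q y w, fderiv ℝ x y u⟫) :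
    ∃ ψ : EuclideanSpace ℝ (Fin m) → ℝ,
      ContDiffOn ℝ (⊤ : ℕ∞) ψ U ∧ ∀ y ∈ V, q y = gradient ψ (x y) := by
  have hinvx : ∀ y ∈ V, xinv ∘ x =ᶠ[𝓝 y] id := fun y hy =>
    eventually_of_mem (hV.mem_nhds hy) hleft
  have hqx : ∀ y ∈ V, q =ᶠ[𝓝 y] (q ∘ xinv) ∘ x := fun y hy =>
    (hinvx y hy).mono fun y' hy' => by simp_all
  have hp : ContDiffOn ℝ (⊤ : ℕ∞) (q ∘ xinv) U :=
    hq.comp hxinv fun z hz => by obtain ⟨y, hy, rfl⟩ := hbij.surjOn hz; simpa [hleft y hy]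
  have hpsym : ∀ z ∈ U, ∀ u w,
      ⟪fderiv ℝ (q ∘ xinv) z u, w⟫ = ⟪fderiv ℝ (q ∘ xinv) z w, u⟫ := by
    intro _ hz
    obtain ⟨y, hy, rfl⟩ := hbij.surjOn hz
    have hxy : DifferentiableAt ℝ x y :=
      (hx.differentiableOn (by simp)).differentiableAt (hV.mem_nhds hy)
    have hdiff {f : EuclideanSpace ℝ (Fin m) → EuclideanSpace ℝ (Fin m)}
        (hf : ContDiffOn ℝ (⊤ : ℕ∞) f U) : DifferentiableAt ℝ f (x y) :=
      (hf.differentiableOn (by simp)).differentiableAt (hU.mem_nhds (hbij.mapsTo hy))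
    exact inner_fderiv_comm_of_eventuallyEq_comp hxy (hdiff hp) (hqx y hy)
      (surjective_fderiv_of_eventuallyEq_leftInverse hxy (hdiff hxinv) (hinvx y hy)) (hsym y hy)
  obtain ⟨ψ, hψ⟩ := hUconv.exists_forall_hasGradientAt_of_fderiv_symmetric hU
    (hp.differentiableOn (by simp)) hpsym
  refine ⟨ψ, by simpa using hp.of_hasGradientAt hU hψ, fun y hy => ?_⟩
  rw [(hψ _ (hbij.mapsTo hy)).gradient]
  simp [hleft y hy]

/-- If `x, q : V → ℝ^m` are smooth, `x` is a smooth diffeomorphism from the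
open set `V` onto the convex open set `U`, and the embedding `ι(y) = (x y, q y)` into
`T*ℝ^m = ℝ^m × ℝ^m` pulls the canonical symplectic form back to zero (symmetry condition on
the derivatives), then the image of `ι` is the graph of the differential of a smooth
function `ψ : U → ℝ`, i.e. `q y = ∇ψ (x y)` on `V`. -/
theorem stmt_0 (m : ℕ) (hm : 1 ≤ m)
    (V U : Set (EuclideanSpace ℝ (Fin m)))
    (hV : IsOpen V) (hU : IsOpen U) (hUconv : Convex ℝ U)
    (x q : EuclideanSpace ℝ (Fin m) → EuclideanSpace ℝ (Fin m))
    (hx : ContDiffOn ℝ (⊤ : ℕ∞) x V) (hq : ContDiffOn ℝ (⊤ : ℕ∞) q V)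
    (hbij : Set.BijOn x V U)
    (xinv : EuclideanSpace ℝ (Fin m) → EuclideanSpace ℝ (Fin m))
    (hxinv : ContDiffOn ℝ (⊤ : ℕ∞) xinv U)
    (hleft : ∀ y ∈ V, xinv (x y) = y)
    (hsym : ∀ y ∈ V, ∀ u w : EuclideanSpace ℝ (Fin m),
      ⟪fderiv ℝ q y u, fderiv ℝ x y w⟫ = ⟪fderiv ℝ q y w, fderiv ℝ x y u⟫) :
    ∃ ψ : EuclideanSpace ℝ (Fin m) → ℝ,
      ContDiffOn ℝ (⊤ : ℕ∞) ψ U ∧ ∀ y ∈ V, q y = gradient ψ (x y) :=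
  stmt_0_general m V U hV hU hUconv x q hx hq hbij xinv hxinv hleft hsym
end

section
/- Let V be a 4-dimensional real vector space and let ω be an alternating 2-form on V with ω ∧ ω ≠ 0. Then every alternating 2-form α on V admits a unique decomposition α = α₀ + λ·ω, where λ ∈ ℝ and α₀ is an alternating 2-form satisfying α₀ ∧ ω = 0. -/
/-!
Top-degree forms on a 4-dimensional space form a line, and `ω ∧ ω ≠ 0` spans it. Hence
`α ∧ ω = λ • (ω ∧ ω)` for exactly one `λ`, and then `α₀ := α - λ • ω` is the only possible
effective part.
-/

/-- The wedge product of two alternating 2-forms, as an alternating 4-form. -/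
noncomputable def wedge22 {V : Type*} [AddCommGroup V] [Module ℝ V]
    (α β : V [⋀^Fin 2]→ₗ[ℝ] ℝ) : V [⋀^Fin 4]→ₗ[ℝ] ℝ :=
  ((TensorProduct.lid ℝ ℝ).toLinearMap.compAlternatingMap
    (α.domCoprod β)).domDomCongr finSumFinEquiv

theorem LinearMap.existsUnique_eq_ker_add_smul {K M N : Type*} [Ring K] [IsDomain K]
    [AddCommGroup M] [Module K M] [AddCommGroup N] [Module K N] [Module.IsTorsionFree K N]
    (L : M →ₗ[K] N) {m : M} (hm : L m ≠ 0) (hline : ∀ n : N, ∃ c : K, c • L m = n) (a : M) :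
    ∃! p : M × K, a = p.1 + p.2 • m ∧ L p.1 = 0 := by
  obtain ⟨c, hc⟩ := hline (L a)
  refine ⟨(a - c • m, c), ⟨(sub_add_cancel a _).symm, by rw [map_sub, map_smul, hc, sub_self]⟩, ?_⟩
  rintro ⟨a₀, μ⟩ ⟨rfl, hker⟩
  have hμ : μ = c := smul_left_injective K hm <| by
    simp only [hc, map_add, hker, zero_add, map_smul]
  subst hμ
  simp

theorem AlternatingMap.exists_smul_eq_of_ne_zero {K M ι : Type*} [Field K] [AddCommGroup M]
    [Module K M] [Fintype ι] [DecidableEq ι] (b : Module.Basis ι K M) {η : M [⋀^ι]→ₗ[K] K}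
    (hη : η ≠ 0) (θ : M [⋀^ι]→ₗ[K] K) : ∃ c : K, c • η = θ := by
  have hηb : η b ≠ 0 := fun h ↦ hη <| by rw [η.eq_smul_basis_det b, h, zero_smul]
  refine ⟨θ b / η b, ?_⟩
  calc (θ b / η b) • η = (θ b / η b * η b) • b.det := by rw [mul_smul, ← η.eq_smul_basis_det]
    _ = θ := by rw [div_mul_cancel₀ _ hηb, ← θ.eq_smul_basis_det]

noncomputable def wedge22Left {V : Type*} [AddCommGroup V] [Module ℝ V]
    (ω : V [⋀^Fin 2]→ₗ[ℝ] ℝ) : (V [⋀^Fin 2]→ₗ[ℝ] ℝ) →ₗ[ℝ] V [⋀^Fin 4]→ₗ[ℝ] ℝ where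
  toFun α := wedge22 α ω
  map_add' a b := by
    unfold wedge22
    rw [← AlternatingMap.domCoprod'_apply, ← AlternatingMap.domCoprod'_apply,
      ← AlternatingMap.domCoprod'_apply, TensorProduct.add_tmul, map_add,
      LinearMap.compAlternatingMap_add, AlternatingMap.domDomCongr_add]
  map_smul' c a := by
    unfold wedge22
    rw [← AlternatingMap.domCoprod'_apply, ← AlternatingMap.domCoprod'_apply,
      ← TensorProduct.smul_tmul', map_smul,
      LinearMap.compAlternatingMap_smul, AlternatingMap.domDomCongr_smul, RingHom.id_apply]

/-- Hodge–Lepage–Lychagin in degree two. On a 4-dimensional real vector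
space with `ω ∧ ω ≠ 0`, every alternating 2-form `α` decomposes uniquely as
`α = α₀ + λ • ω` with `α₀ ∧ ω = 0`. -/
theorem stmt_4 (V : Type*) [AddCommGroup V] [Module ℝ V] [FiniteDimensional ℝ V]
    (hdim : Module.finrank ℝ V = 4)
    (ω : V [⋀^Fin 2]→ₗ[ℝ] ℝ) (hωω : wedge22 ω ω ≠ 0)
    (α : V [⋀^Fin 2]→ₗ[ℝ] ℝ) :
    ∃! p : (V [⋀^Fin 2]→ₗ[ℝ] ℝ) × ℝ,
      α = p.1 + p.2 • ω ∧ wedge22 p.1 ω = 0 := by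
  let b : Module.Basis (Fin 4) ℝ V := (Module.finBasis ℝ V).reindex (finCongr hdim)
  exact (wedge22Left ω).existsUnique_eq_ker_add_smul hωω
    (AlternatingMap.exists_smul_eq_of_ne_zero b hωω) α
end

section
/- Let v : ℝ³ → ℝ³ be a smooth vector field, let θ = Σ_i q_i dx_i be the tautological one-form on ℝ⁶ = ℝ³ × ℝ³, and let ι(x) = (x, v(x)). Then the pullback ι*(θ ∧ dθ) equals the 3-form x ↦ ⟨v(x), (∇×v)(x)⟩ dx₁ ∧ dx₂ ∧ dx₃; concretely, for every x ∈ ℝ³ and all u, w, z ∈ ℝ³: (θ ∧ dθ)_{ι(x)}(Dι(x)u, Dι(x)w, Dι(x)z) = ⟨v(x), curl v(x)⟩ · det[u, w, z], where curl v = (∂_2 v_3 − ∂_3 v_2, ∂_3 v_1 − ∂_1 v_3, ∂_1 v_2 − ∂_2 v_1). -/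
/-!
At a point `x`, the graph map `ι` pulls `θ` back to `Σᵢ vᵢ dxⁱ` and `dθ` back to
`Σᵢ dvᵢ ∧ dxⁱ`, whose coefficients are those of the skew part of the Jacobian `A` of `v`,
i.e. the entries of `curl v`. The claim is therefore a pointwise identity in `v(x)` and `A`
alone, which is a polynomial identity checked by expanding the determinant.
-/

noncomputable def pd {m : ℕ} (j : Fin m) (f : (Fin m → ℝ) → ℝ) : (Fin m → ℝ) → ℝ :=
  fun x => fderiv ℝ f x (Pi.single j 1)

/-- The value of the 3-form `θ ∧ dθ` on `ℝ³ × ℝ³` (with `θ = Σᵢ qᵢ dxⁱ` the tautological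
one-form and `dθ = Σᵢ dqᵢ ∧ dxⁱ`) at the point `pt`, evaluated on `a, b, c`. -/
def thetaDthetaVal (pt a b c : (Fin 3 → ℝ) × (Fin 3 → ℝ)) : ℝ :=
  (∑ i, pt.2 i * a.1 i) * (∑ i, (b.2 i * c.1 i - c.2 i * b.1 i))
  - (∑ i, pt.2 i * b.1 i) * (∑ i, (a.2 i * c.1 i - c.2 i * a.1 i))
  + (∑ i, pt.2 i * c.1 i) * (∑ i, (a.2 i * b.1 i - b.2 i * a.1 i))

open scoped Matrix

/-- The curl of the linear vector field `y ↦ A *ᵥ y`. -/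
def linearCurl (A : Matrix (Fin 3) (Fin 3) ℝ) : Fin 3 → ℝ :=
  ![A 2 1 - A 1 2, A 0 2 - A 2 0, A 1 0 - A 0 1]

theorem thetaDthetaVal_graph_mulVec (p q : Fin 3 → ℝ) (A : Matrix (Fin 3) (Fin 3) ℝ)
    (u w z : Fin 3 → ℝ) :
    thetaDthetaVal (p, q) (u, A *ᵥ u) (w, A *ᵥ w) (z, A *ᵥ z) =
      (∑ i, q i * linearCurl A i) * Matrix.det (Matrix.transpose (Matrix.of ![u, w, z])) := by
  simp only [thetaDthetaVal, linearCurl, Matrix.mulVec, dotProduct, Fin.sum_univ_three,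
    Matrix.det_fin_three, Matrix.transpose_apply, Matrix.of_apply, Matrix.cons_val_zero,
    Matrix.cons_val_one, Matrix.cons_val_two, Matrix.head_cons, Matrix.tail_cons]
  ring

theorem pd_eq_fderiv_apply {m n : ℕ} {v : (Fin m → ℝ) → Fin n → ℝ} {x : Fin m → ℝ}
    (hv : DifferentiableAt ℝ v x) (i : Fin n) (j : Fin m) :
    pd j (fun y => v y i) x = fderiv ℝ v x (Pi.single j 1) i := by
  rw [pd, fderiv_apply hv i]
  rfl

theorem fderiv_graph_apply {E F : Type*} [NormedAddCommGroup E] [NormedSpace ℝ E]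
    [NormedAddCommGroup F] [NormedSpace ℝ F] {v : E → F} {x : E}
    (hv : DifferentiableAt ℝ v x) (a : E) :
    fderiv ℝ (fun y => (y, v y)) x a = (a, fderiv ℝ v x a) := by
  have h : HasFDerivAt (fun y => (y, v y)) ((ContinuousLinearMap.id ℝ E).prod (fderiv ℝ v x)) x :=
    (hasFDerivAt_id x).prodMk hv.hasFDerivAt
  rw [h.fderiv]
  rfl

/-- For the graph map `ι(x) = (x, v(x))` of a smooth vector field `v` on
`ℝ³`, the pullback of `θ ∧ dθ` equals the helicity density `⟨v, curl v⟩` times the volume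
form `dx₁ ∧ dx₂ ∧ dx₃`. -/
theorem stmt_11 (v : (Fin 3 → ℝ) → (Fin 3 → ℝ)) (hv : ContDiff ℝ (⊤ : ℕ∞) v)
    (ι : (Fin 3 → ℝ) → (Fin 3 → ℝ) × (Fin 3 → ℝ)) (hι : ∀ x, ι x = (x, v x))
    (curl : (Fin 3 → ℝ) → (Fin 3 → ℝ))
    (hcurl : ∀ x, curl x =
      ![pd 1 (fun y => v y 2) x - pd 2 (fun y => v y 1) x,
        pd 2 (fun y => v y 0) x - pd 0 (fun y => v y 2) x,
        pd 0 (fun y => v y 1) x - pd 1 (fun y => v y 0) x]) :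
    ∀ (x u w z : Fin 3 → ℝ),
      thetaDthetaVal (ι x) (fderiv ℝ ι x u) (fderiv ℝ ι x w) (fderiv ℝ ι x z) =
        (∑ i, v x i * curl x i) * Matrix.det (Matrix.transpose (Matrix.of ![u, w, z])) := by
  intro x u w z
  have hvx : DifferentiableAt ℝ v x := hv.differentiable (by simp) x
  set A := LinearMap.toMatrix' (fderiv ℝ v x : (Fin 3 → ℝ) →ₗ[ℝ] Fin 3 → ℝ)
  have hcurlA : curl x = linearCurl A := by
    simp only [hcurl, pd_eq_fderiv_apply hvx, linearCurl, A, LinearMap.toMatrix'_apply,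
      ContinuousLinearMap.coe_coe]
  have hιA (a : Fin 3 → ℝ) : fderiv ℝ ι x a = (a, A *ᵥ a) := by
    rw [funext hι, fderiv_graph_apply hvx, LinearMap.toMatrix'_mulVec, ContinuousLinearMap.coe_coe]
  rw [hιA, hιA, hιA, hι, hcurlA]
  exact thetaDthetaVal_graph_mulVec x (v x) A u w z
end

section
/- Let α, β, γ, σ, ζ be real numbers with α + β + γ = 0, and set P := 2(αβ + γ(α + β) + ζ² − σ²) (the pressure Laplacian of the idealised Burgers vortex) and E₃ := αβ − σ² + ζ². (i) If P > 0 then E₃ > 0. (ii) If moreover α = β = −γ/2 and P > 0, then E₊ := ½(4ζ² − γ² + 2|σ|·√(4ζ² + γ²)) > 0 and E₋ := ½(4ζ² − γ² − 2|σ|·√(4ζ² + γ²)) ≥ −γ². -/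
/-- For the idealised Burgers vortex with strain parameters `α, β, γ, σ`
and vorticity `ζ`, satisfying the divergence-free constraint `α + β + γ = 0`, with pressure
Laplacian `P = 2(αβ + γ(α+β) + ζ² − σ²)` and `E₃ = αβ − σ² + ζ²`:
(i) `P > 0` implies `E₃ > 0`; (ii) in the axisymmetric case `α = β = −γ/2`, if `P > 0` then
`E₊ = ½(4ζ² − γ² + 2|σ|√(4ζ² + γ²)) > 0` and `E₋ = ½(4ζ² − γ² − 2|σ|√(4ζ² + γ²)) ≥ −γ²`. -/
theorem stmt_16 (α β γ σ ζ : ℝ) (hdiv : α + β + γ = 0)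
    (P : ℝ) (hP : P = 2 * (α * β + γ * (α + β) + ζ ^ 2 - σ ^ 2))
    (E₃ : ℝ) (hE₃ : E₃ = α * β - σ ^ 2 + ζ ^ 2) :
    (0 < P → 0 < E₃) ∧
    (α = -γ / 2 → β = -γ / 2 → 0 < P →
      0 < (4 * ζ ^ 2 - γ ^ 2 + 2 * |σ| * Real.sqrt (4 * ζ ^ 2 + γ ^ 2)) / 2 ∧
      -γ ^ 2 ≤ (4 * ζ ^ 2 - γ ^ 2 - 2 * |σ| * Real.sqrt (4 * ζ ^ 2 + γ ^ 2)) / 2) := by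
  constructor
  · intro hPpos
    have hγ : γ = -(α + β) := by linarith
    rw [hγ] at hP
    nlinarith [sq_nonneg (α + β)]
  · intro hα hβ hPpos
    subst hα hβ
    set s := Real.sqrt (4 * ζ ^ 2 + γ ^ 2) with hs
    have hnn : (0:ℝ) ≤ 4 * ζ ^ 2 + γ ^ 2 := by positivity
    have hs2 : s ^ 2 = 4 * ζ ^ 2 + γ ^ 2 := Real.sq_sqrt hnn
    have hs0 : 0 ≤ s := Real.sqrt_nonneg _
    have habs : |σ| ^ 2 = σ ^ 2 := sq_abs σ
    have habs0 : 0 ≤ |σ| := abs_nonneg σ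
    have hkey : ζ ^ 2 > σ ^ 2 + 3 * γ ^ 2 / 4 := by nlinarith
    have hsge : 2 * |σ| ≤ s := by nlinarith [sq_nonneg (s - 2 * |σ|), sq_nonneg (s + 2 * |σ|)]
    constructor
    · nlinarith
    · nlinarith [mul_le_mul_of_nonneg_left hsge habs0]
end
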